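/- arXiv:1712.08047 — 6 statements merged into one kernel-verified Lean document; each statement's English description precedes it below -/
import Mathlib

section
/- Let (B, α, ψ) be a quasi-coaction of a quasi-triangular quasi-bialgebra (A, Δ, φ, R) with automorphism σ preserving Δ, φ, R, and let E ∈ B ⊗ A be a ribbon σ-braid, i.e., E is invertible, E·(id⊗σ)α(b) = α(b)·E for all b ∈ B, and E satisfies the σ-octagon and ribbon equations. If g ∈ A is a group-like element (Δ(g) = g⊗g, with g invertible and (σ' := (Ad g)∘σ) ), then E' = E·(1⊗g^{-1}) is a ribbon σ'-braid for (B, α, ψ) with respect to σ' = (Ad g)∘σ. -/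
/-!
The twist is a conjugation: `E' = E·(1 ⊗ g⁻¹)` and `(id ⊗ σ')(x) = (1 ⊗ g)·(id ⊗ σ)(x)·(1 ⊗ g⁻¹)`.
Substituting both into the commutation, octagon and ribbon relations for `E'`, every factor `1 ⊗ g`
produced by `σ'` meets a factor `1 ⊗ g⁻¹` produced by `E'` and cancels; the ribbon relation needs
`Δ(g⁻¹) = g⁻¹ ⊗ g⁻¹`, and that `1 ⊗ 1 ⊗ g⁻¹` commutes with `E₀₁`.
-/

open scoped TensorProduct

noncomputable section

variable (k A B : Type*) [CommRing k] [Ring A] [Ring B] [Algebra k A] [Algebra k B]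

/-! Leg-manipulation algebra homomorphisms.  We write `B ⊗ A ⊗ A` for
`B ⊗[k] (A ⊗[k] A)`, with `B` in tensor position `0`. -/

/-- The flip `x ⊗ y ↦ y ⊗ x` on `A ⊗ A`. -/
def swapA : A ⊗[k] A →ₐ[k] A ⊗[k] A := (Algebra.TensorProduct.comm k A A).toAlgHom

/-- Legs `1,3` insertion `A ⊗ A → A ⊗ (A ⊗ A)`. -/
def r13A : A ⊗[k] A →ₐ[k] A ⊗[k] (A ⊗[k] A) :=
  Algebra.TensorProduct.map (AlgHom.id k A)
    (Algebra.TensorProduct.includeRight : A →ₐ[k] A ⊗[k] A)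

/-- Legs `1,2` insertion `A ⊗ A → A ⊗ (A ⊗ A)`. -/
def r12A : A ⊗[k] A →ₐ[k] A ⊗[k] (A ⊗[k] A) :=
  Algebra.TensorProduct.map (AlgHom.id k A)
    (Algebra.TensorProduct.includeLeft : A →ₐ[k] A ⊗[k] A)

/-- Legs `2,3` insertion `A ⊗ A → A ⊗ (A ⊗ A)`. -/
def r23A : A ⊗[k] A →ₐ[k] A ⊗[k] (A ⊗[k] A) :=
  (Algebra.TensorProduct.includeRight : A ⊗[k] A →ₐ[k] A ⊗[k] (A ⊗[k] A))

/-- Leg permutation `x₁⊗x₂⊗x₃ ↦ x₁⊗x₃⊗x₂` of `A ⊗ A ⊗ A`. -/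
def p132 : A ⊗[k] (A ⊗[k] A) →ₐ[k] A ⊗[k] (A ⊗[k] A) :=
  Algebra.TensorProduct.map (AlgHom.id k A) (swapA k A)

/-- Leg permutation `x₁⊗x₂⊗x₃ ↦ x₂⊗x₁⊗x₃` of `A ⊗ A ⊗ A`. -/
def p213 : A ⊗[k] (A ⊗[k] A) →ₐ[k] A ⊗[k] (A ⊗[k] A) :=
  ((Algebra.TensorProduct.assoc k k k A A A).toAlgHom.comp
    (Algebra.TensorProduct.map (swapA k A) (AlgHom.id k A))).comp
      (Algebra.TensorProduct.assoc k k k A A A).symm.toAlgHom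

/-- Leg permutation placing `x₁⊗x₂⊗x₃` as `x₃⊗x₁⊗x₂` (the pattern of `φ₃₁₂`). -/
def p312 : A ⊗[k] (A ⊗[k] A) →ₐ[k] A ⊗[k] (A ⊗[k] A) :=
  (Algebra.TensorProduct.comm k (A ⊗[k] A) A).toAlgHom.comp
    (Algebra.TensorProduct.assoc k k k A A A).symm.toAlgHom

/-- Leg permutation placing `x₁⊗x₂⊗x₃` as `x₂⊗x₃⊗x₁` (the pattern of `φ₂₃₁`). -/
def p231 : A ⊗[k] (A ⊗[k] A) →ₐ[k] A ⊗[k] (A ⊗[k] A) :=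
  (Algebra.TensorProduct.assoc k k k A A A).toAlgHom.comp
    (Algebra.TensorProduct.comm k A (A ⊗[k] A)).toAlgHom

/-- `Δ ⊗ id : A ⊗ A → A ⊗ A ⊗ A`. -/
def dL (Δ : A →ₐ[k] A ⊗[k] A) : A ⊗[k] A →ₐ[k] A ⊗[k] (A ⊗[k] A) :=
  (Algebra.TensorProduct.assoc k k k A A A).toAlgHom.comp
    (Algebra.TensorProduct.map Δ (AlgHom.id k A))

/-- `id ⊗ Δ : A ⊗ A → A ⊗ A ⊗ A`. -/
def dR (Δ : A →ₐ[k] A ⊗[k] A) : A ⊗[k] A →ₐ[k] A ⊗[k] (A ⊗[k] A) :=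
  Algebra.TensorProduct.map (AlgHom.id k A) Δ

/-- `ε ⊗ id : A ⊗ A → A`. -/
def epsL (ε : A →ₐ[k] k) : A ⊗[k] A →ₐ[k] A :=
  (Algebra.TensorProduct.lid k A).toAlgHom.comp
    (Algebra.TensorProduct.map ε (AlgHom.id k A))

/-- `id ⊗ ε : A ⊗ A → A`. -/
def epsR (ε : A →ₐ[k] k) : A ⊗[k] A →ₐ[k] A :=
  (Algebra.TensorProduct.rid k k A).toAlgHom.comp
    (Algebra.TensorProduct.map (AlgHom.id k A) ε)

/-- `ψ ↦ ψ₀₂₁` (flip of the two `A`-legs of `B ⊗ A ⊗ A`). -/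
def flip021 : B ⊗[k] (A ⊗[k] A) →ₐ[k] B ⊗[k] (A ⊗[k] A) :=
  Algebra.TensorProduct.map (AlgHom.id k B) (swapA k A)

/-- Legs `0,2` insertion `B ⊗ A → B ⊗ A ⊗ A`. -/
def b02 : B ⊗[k] A →ₐ[k] B ⊗[k] (A ⊗[k] A) :=
  Algebra.TensorProduct.map (AlgHom.id k B)
    (Algebra.TensorProduct.includeRight : A →ₐ[k] A ⊗[k] A)

/-- Legs `0,1` insertion `B ⊗ A → B ⊗ A ⊗ A`. -/
def b01 : B ⊗[k] A →ₐ[k] B ⊗[k] (A ⊗[k] A) :=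
  Algebra.TensorProduct.map (AlgHom.id k B)
    (Algebra.TensorProduct.includeLeft : A →ₐ[k] A ⊗[k] A)

/-- Legs `1,2` insertion `A ⊗ A → B ⊗ A ⊗ A`. -/
def bR : A ⊗[k] A →ₐ[k] B ⊗[k] (A ⊗[k] A) :=
  (Algebra.TensorProduct.includeRight : A ⊗[k] A →ₐ[k] B ⊗[k] (A ⊗[k] A))

/-- `id ⊗ id ⊗ τ` on `B ⊗ A ⊗ A`, for an algebra map `τ : A → A`. -/
def lastLeg (τ : A →ₐ[k] A) : B ⊗[k] (A ⊗[k] A) →ₐ[k] B ⊗[k] (A ⊗[k] A) :=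
  Algebra.TensorProduct.map (AlgHom.id k B)
    (Algebra.TensorProduct.map (AlgHom.id k A) τ)

/-- `id ⊗ τ ⊗ τ` on `B ⊗ A ⊗ A`. -/
def lastTwoLegs (τ : A →ₐ[k] A) : B ⊗[k] (A ⊗[k] A) →ₐ[k] B ⊗[k] (A ⊗[k] A) :=
  Algebra.TensorProduct.map (AlgHom.id k B) (Algebra.TensorProduct.map τ τ)

/-- `α ⊗ id : B ⊗ A → B ⊗ A ⊗ A`. -/
def alphaExt (α : B →ₐ[k] B ⊗[k] A) : B ⊗[k] A →ₐ[k] B ⊗[k] (A ⊗[k] A) :=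
  (Algebra.TensorProduct.assoc k k k B A A).toAlgHom.comp
    (Algebra.TensorProduct.map α (AlgHom.id k A))

/-- `id ⊗ Δ : B ⊗ A → B ⊗ A ⊗ A`. -/
def deltaB (Δ : A →ₐ[k] A ⊗[k] A) : B ⊗[k] A →ₐ[k] B ⊗[k] (A ⊗[k] A) :=
  Algebra.TensorProduct.map (AlgHom.id k B) Δ

/-- `id ⊗ ε : B ⊗ A → B`. -/
def epsB (ε : A →ₐ[k] k) : B ⊗[k] A →ₐ[k] B :=
  (Algebra.TensorProduct.rid k k B).toAlgHom.comp
    (Algebra.TensorProduct.map (AlgHom.id k B) ε)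

/-- `id ⊗ ε ⊗ id : B ⊗ A ⊗ A → B ⊗ A`. -/
def eps1of2 (ε : A →ₐ[k] k) : B ⊗[k] (A ⊗[k] A) →ₐ[k] B ⊗[k] A :=
  Algebra.TensorProduct.map (AlgHom.id k B) (epsL k A ε)

/-- `id ⊗ id ⊗ ε : B ⊗ A ⊗ A → B ⊗ A`. -/
def eps2of2 (ε : A →ₐ[k] k) : B ⊗[k] (A ⊗[k] A) →ₐ[k] B ⊗[k] A :=
  Algebra.TensorProduct.map (AlgHom.id k B) (epsR k A ε)

/-! Four-leg maps, used for the pentagon axioms. -/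

/-- `1 ⊗ (·) : A ⊗ A ⊗ A → B ⊗ A ⊗ A ⊗ A`. -/
def ins234 : A ⊗[k] (A ⊗[k] A) →ₐ[k] B ⊗[k] (A ⊗[k] (A ⊗[k] A)) :=
  Algebra.TensorProduct.includeRight

/-- `(·) ⊗ 1` in legs `0,1,2` of `B ⊗ A ⊗ A ⊗ A`. -/
def ins012 : B ⊗[k] (A ⊗[k] A) →ₐ[k] B ⊗[k] (A ⊗[k] (A ⊗[k] A)) :=
  Algebra.TensorProduct.map (AlgHom.id k B)
    (Algebra.TensorProduct.map (AlgHom.id k A)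
      (Algebra.TensorProduct.includeLeft : A →ₐ[k] A ⊗[k] A))

/-- `id ⊗ Δ ⊗ id : B ⊗ A ⊗ A → B ⊗ A ⊗ A ⊗ A`. -/
def midDelta (Δ : A →ₐ[k] A ⊗[k] A) :
    B ⊗[k] (A ⊗[k] A) →ₐ[k] B ⊗[k] (A ⊗[k] (A ⊗[k] A)) :=
  Algebra.TensorProduct.map (AlgHom.id k B) (dL k A Δ)

/-- `id ⊗ id ⊗ Δ : B ⊗ A ⊗ A → B ⊗ A ⊗ A ⊗ A`. -/
def lastDelta (Δ : A →ₐ[k] A ⊗[k] A) :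
    B ⊗[k] (A ⊗[k] A) →ₐ[k] B ⊗[k] (A ⊗[k] (A ⊗[k] A)) :=
  Algebra.TensorProduct.map (AlgHom.id k B)
    (Algebra.TensorProduct.map (AlgHom.id k A) Δ)

/-- `α ⊗ id ⊗ id : B ⊗ A ⊗ A → B ⊗ A ⊗ A ⊗ A`. -/
def alphaExt2 (α : B →ₐ[k] B ⊗[k] A) :
    B ⊗[k] (A ⊗[k] A) →ₐ[k] B ⊗[k] (A ⊗[k] (A ⊗[k] A)) :=
  (Algebra.TensorProduct.assoc k k k B A (A ⊗[k] A)).toAlgHom.comp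
    (Algebra.TensorProduct.map α (AlgHom.id k (A ⊗[k] A)))

/-- Pure four-leg maps on `A ⊗ A ⊗ A ⊗ A` for the φ-pentagon. -/
def a234 : A ⊗[k] (A ⊗[k] A) →ₐ[k] A ⊗[k] (A ⊗[k] (A ⊗[k] A)) :=
  Algebra.TensorProduct.includeRight

def a123 : A ⊗[k] (A ⊗[k] A) →ₐ[k] A ⊗[k] (A ⊗[k] (A ⊗[k] A)) :=
  Algebra.TensorProduct.map (AlgHom.id k A)
    (Algebra.TensorProduct.map (AlgHom.id k A)
      (Algebra.TensorProduct.includeLeft : A →ₐ[k] A ⊗[k] A))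

def aD34 (Δ : A →ₐ[k] A ⊗[k] A) :
    A ⊗[k] (A ⊗[k] A) →ₐ[k] A ⊗[k] (A ⊗[k] (A ⊗[k] A)) :=
  Algebra.TensorProduct.map (AlgHom.id k A)
    (Algebra.TensorProduct.map (AlgHom.id k A) Δ)

def aD23 (Δ : A →ₐ[k] A ⊗[k] A) :
    A ⊗[k] (A ⊗[k] A) →ₐ[k] A ⊗[k] (A ⊗[k] (A ⊗[k] A)) :=
  Algebra.TensorProduct.map (AlgHom.id k A) (dL k A Δ)

def aD12 (Δ : A →ₐ[k] A ⊗[k] A) :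
    A ⊗[k] (A ⊗[k] A) →ₐ[k] A ⊗[k] (A ⊗[k] (A ⊗[k] A)) :=
  (Algebra.TensorProduct.assoc k k k A A (A ⊗[k] A)).toAlgHom.comp
    (Algebra.TensorProduct.map Δ (AlgHom.id k (A ⊗[k] A)))

/-- `id ⊗ ε ⊗ id : A ⊗ A ⊗ A → A ⊗ A`. -/
def aEpsMid (ε : A →ₐ[k] k) : A ⊗[k] (A ⊗[k] A) →ₐ[k] A ⊗[k] A :=
  Algebra.TensorProduct.map (AlgHom.id k A) (epsL k A ε)

open Algebra.TensorProduct in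
theorem Algebra.TensorProduct.tmul_mul_tmul_eq_one {R S T : Type*} [CommSemiring R]
    [Semiring S] [Semiring T] [Algebra R S] [Algebra R T] {a a' : S} {b b' : T}
    (ha : a * a' = 1) (hb : b * b' = 1) : a ⊗ₜ[R] b * a' ⊗ₜ[R] b' = 1 := by
  rw [tmul_mul_tmul, ha, hb, one_def]

theorem Algebra.TensorProduct.map_apply_eq_mul_mul {R S T U V : Type*} [CommSemiring R]
    [Semiring S] [Semiring T] [Semiring U] [Semiring V]
    [Algebra R S] [Algebra R T] [Algebra R U] [Algebra R V]
    {f f' : S →ₐ[R] T} {h h' : U →ₐ[R] V} {a a' : T} {b b' : V}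
    (hf : ∀ x, f' x = a * f x * a') (hh : ∀ y, h' y = b * h y * b') (t : S ⊗[R] U) :
    map f' h' t = a ⊗ₜ b * map f h t * a' ⊗ₜ b' := by
  induction t using TensorProduct.induction_on with
  | zero => simp
  | tmul x y => simp [hf, hh, tmul_mul_tmul, mul_assoc]
  | add x y hx hy => simp [hx, hy, mul_add, add_mul]

section

variable {k A B}

theorem groupLike_inverse {Δ : A →ₐ[k] A ⊗[k] A} {g ginv : A} (hg : Δ g = g ⊗ₜ[k] g)
    (hg1 : g * ginv = 1) (hg2 : ginv * g = 1) : Δ ginv = ginv ⊗ₜ[k] ginv :=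
  (left_inv_eq_right_inv (Algebra.TensorProduct.tmul_mul_tmul_eq_one hg2 hg2)
    (by rw [← hg, ← map_mul, hg1, map_one])).symm

variable {σ σ' : A →ₐ[k] A} {g ginv : A}

theorem map_id_apply_of_conj (hσ' : ∀ x, σ' x = g * σ x * ginv) (t : B ⊗[k] A) :
    Algebra.TensorProduct.map (AlgHom.id k B) σ' t =
      (1 : B) ⊗ₜ g * Algebra.TensorProduct.map (AlgHom.id k B) σ t * (1 : B) ⊗ₜ ginv :=
  Algebra.TensorProduct.map_apply_eq_mul_mul (by simp) hσ' t

theorem lastLeg_apply_of_conj (hσ' : ∀ x, σ' x = g * σ x * ginv) (t : B ⊗[k] (A ⊗[k] A)) :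
    lastLeg k A B σ' t =
      (1 : B) ⊗ₜ ((1 : A) ⊗ₜ g) * lastLeg k A B σ t * (1 : B) ⊗ₜ ((1 : A) ⊗ₜ ginv) :=
  Algebra.TensorProduct.map_apply_eq_mul_mul (by simp) (map_id_apply_of_conj hσ') t

theorem lastTwoLegs_apply_of_conj (hσ' : ∀ x, σ' x = g * σ x * ginv)
    (t : B ⊗[k] (A ⊗[k] A)) :
    lastTwoLegs k A B σ' t =
      (1 : B) ⊗ₜ (g ⊗ₜ g) * lastTwoLegs k A B σ t * (1 : B) ⊗ₜ (ginv ⊗ₜ ginv) :=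
  Algebra.TensorProduct.map_apply_eq_mul_mul (by simp)
    (Algebra.TensorProduct.map_apply_eq_mul_mul hσ' hσ') t

theorem commute_b01_one_tmul_one_tmul (t : B ⊗[k] A) (a : A) :
    Commute (b01 k A B t) ((1 : B) ⊗ₜ ((1 : A) ⊗ₜ a)) := by
  induction t using TensorProduct.induction_on with
  | zero => simp
  | tmul b x => simp [b01, Commute, SemiconjBy, Algebra.TensorProduct.tmul_mul_tmul]
  | add x y hx hy => rw [map_add]; exact hx.add_left hy

end

theorem ribbon_braid_groupLike_twist
    (Δ : A →ₐ[k] A ⊗[k] A)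
    (R : A ⊗[k] A)
    (σ : A →ₐ[k] A)
    -- normalized quasi-coaction `(B, α, ψ)`
    (α : B →ₐ[k] B ⊗[k] A) (ψ ψinv : B ⊗[k] (A ⊗[k] A))
    -- `E` is a ribbon σ-braid
    (E Einv : B ⊗[k] A)
    (hE1 : E * Einv = 1) (hE2 : Einv * E = 1)
    (hEcomm : ∀ b : B,
      E * Algebra.TensorProduct.map (AlgHom.id k B) σ (α b) = α b * E)
    (hoctagon : alphaExt k A B α E =
      ψinv * bR k A B (swapA k A R) * flip021 k A B ψ * b02 k A B E *
        lastLeg k A B σ (flip021 k A B ψinv * bR k A B R * ψ))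
    (hribbon : deltaB k A B Δ E =
      bR k A B (swapA k A R) * flip021 k A B ψ * b02 k A B E *
        lastLeg k A B σ (flip021 k A B ψinv * bR k A B R * ψ) *
        b01 k A B E * lastTwoLegs k A B σ ψinv)
    -- a group-like element `g` and `σ' = (Ad g) ∘ σ`
    (g ginv : A) (hg : Δ g = g ⊗ₜ[k] g)
    (hg1 : g * ginv = 1) (hg2 : ginv * g = 1)
    (σ' : A →ₐ[k] A) (hσ' : ∀ x : A, σ' x = g * σ x * ginv) :
    -- conclusion: `E' = E(1 ⊗ g⁻¹)` is a ribbon σ'-braid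
    let E' : B ⊗[k] A := E * ((1 : B) ⊗ₜ[k] ginv)
    (∃ E'inv : B ⊗[k] A, E' * E'inv = 1 ∧ E'inv * E' = 1) ∧
    (∀ b : B,
      E' * Algebra.TensorProduct.map (AlgHom.id k B) σ' (α b) = α b * E') ∧
    (alphaExt k A B α E' =
      ψinv * bR k A B (swapA k A R) * flip021 k A B ψ * b02 k A B E' *
        lastLeg k A B σ' (flip021 k A B ψinv * bR k A B R * ψ)) ∧
    (deltaB k A B Δ E' =
      bR k A B (swapA k A R) * flip021 k A B ψ * b02 k A B E' *
        lastLeg k A B σ' (flip021 k A B ψinv * bR k A B R * ψ) *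
        b01 k A B E' * lastTwoLegs k A B σ' ψinv) := by
  open Algebra.TensorProduct in
  intro E'
  have hginv_g : (1 : B) ⊗ₜ[k] ginv * (1 : B) ⊗ₜ g = 1 := tmul_mul_tmul_eq_one (one_mul 1) hg2
  have hg_ginv : (1 : B) ⊗ₜ[k] g * (1 : B) ⊗ₜ ginv = 1 := tmul_mul_tmul_eq_one (one_mul 1) hg1
  have hcancel_last : (1 : B) ⊗ₜ[k] ((1 : A) ⊗ₜ[k] ginv) * (1 : B) ⊗ₜ ((1 : A) ⊗ₜ g) = 1 :=
    tmul_mul_tmul_eq_one (one_mul 1) (tmul_mul_tmul_eq_one (one_mul 1) hg2)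
  have hcancel_ribbon : (1 : B) ⊗ₜ[k] ((1 : A) ⊗ₜ[k] ginv) * (1 : B) ⊗ₜ (ginv ⊗ₜ (1 : A)) *
      (1 : B) ⊗ₜ (g ⊗ₜ g) = 1 := by
    simp only [tmul_mul_tmul, one_mul, mul_one, hg2, one_def]
  have hE'02 : b02 k A B E' = b02 k A B E * (1 : B) ⊗ₜ ((1 : A) ⊗ₜ ginv) := map_mul _ _ _
  have hE'01 : b01 k A B E' = b01 k A B E * (1 : B) ⊗ₜ (ginv ⊗ₜ (1 : A)) := map_mul _ _ _
  have hαE' : alphaExt k A B α E' = alphaExt k A B α E * (1 : B) ⊗ₜ ((1 : A) ⊗ₜ ginv) := by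
    simp [E', alphaExt, one_def]
  have hΔE' : deltaB k A B Δ E' = deltaB k A B Δ E * (1 : B) ⊗ₜ (ginv ⊗ₜ ginv) := by
    simp [E', deltaB, groupLike_inverse hg hg1 hg2]
  rw [hE'02, hE'01, hαE', hΔE', lastLeg_apply_of_conj hσ', lastTwoLegs_apply_of_conj hσ',
    hoctagon, hribbon]
  refine ⟨⟨(1 : B) ⊗ₜ g * Einv, ?_, ?_⟩, fun b => ?_, ?_, ?_⟩
  · rw [mul_assoc, ← mul_assoc _ (1 ⊗ₜ g), hginv_g, one_mul, hE1]
  · rw [mul_assoc, ← mul_assoc Einv, hE2, one_mul, hg_ginv]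
  · rw [map_id_apply_of_conj hσ', ← mul_assoc, mul_assoc E, ← mul_assoc _ (1 ⊗ₜ g), hginv_g,
      one_mul, hEcomm, mul_assoc]
  · simp only [mul_assoc]
    rw [← mul_assoc _ (1 ⊗ₜ (1 ⊗ₜ g)), hcancel_last, one_mul]
  · simp only [mul_assoc]
    rw [← mul_assoc _ (1 ⊗ₜ (1 ⊗ₜ g)), hcancel_last, one_mul,
      ← (commute_b01_one_tmul_one_tmul E ginv).left_comm, ← mul_assoc _ (1 ⊗ₜ (ginv ⊗ₜ 1)),
      ← mul_assoc _ (1 ⊗ₜ (g ⊗ₜ g)), hcancel_ribbon, one_mul]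

end
end

section
/- Let θ be an involutive automorphism of a compact semisimple Lie algebra u, with eigenspace decomposition u = k ⊕ m (k = u^θ). Then g_θ = k ⊕ i m is a real form of g = u ⊗ ℂ: it is a real Lie subalgebra of g whose complexification is g, and θ restricted to g_θ is a Cartan involution on it (i.e., the bilinear form −B(X, θ(X)) is positive definite on g_θ, where B is the Killing form). -/
/-!
Because `θ` is an involution preserving `u`, we have `u = k ⊕ m`, and `θ` acts on `k ⊕ i•m` by
`a + i•b ↦ a - i•b`. The bracket relations `[k,k] ⊆ k`, `[k,m] ⊆ m`, `[m,m] ⊆ k` together with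
`i² = -1` make `k ⊕ i•m` a subalgebra. Its sum with `i•(k ⊕ i•m) = i•k ⊕ m` is `u + i•u = g`; and if
`a + i•b = i•c - d` with `a, c ∈ k`, `b, d ∈ m`, then `a + d = i•(c - b) ∈ u ∩ i•u = 0`, so
`a = -d ∈ k ∩ m = 0` and then `b = c ∈ k ∩ m = 0`. Finally, by symmetry of the Killing form,
`B(a + i•b, θ(a + i•b)) = B(a, a) + B(b, b)`, which is real and negative by compactness of `u`.
-/

section

open Complex

variable (V : Type*) [AddCommGroup V] [Module ℂ V]

def smulI : V →ₗ[ℝ] V := (I • LinearMap.id : V →ₗ[ℂ] V).restrictScalars ℝ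

variable {V}

@[simp] lemma smulI_apply (x : V) : smulI V x = I • x := rfl

lemma smulI_smulI (x : V) : smulI V (smulI V x) = -x := by
  rw [smulI_apply, smulI_apply, smul_smul, I_mul_I, neg_one_smul]

lemma map_smulI_map_smulI (p : Submodule ℝ V) : (p.map (smulI V)).map (smulI V) = p := by
  rw [← Submodule.map_comp]
  have : smulI V ∘ₗ smulI V = -LinearMap.id := LinearMap.ext smulI_smulI
  rw [this, Submodule.map_neg, Submodule.map_id]

lemma disjoint_of_apply_eq_self_of_apply_eq_neg {k m : Submodule ℝ V} {θ : V → V}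
    (hk : ∀ x ∈ k, θ x = x) (hm : ∀ x ∈ m, θ x = -x) : Disjoint k m := by
  have := IsAddTorsionFree.of_isTorsionFree ℂ V
  exact Submodule.disjoint_def.mpr fun x hxk hxm =>
    self_eq_neg.mp ((hk x hxk).symm.trans (hm x hxm))

lemma sup_eq_of_involutive {u k m : Submodule ℝ V} {θ : V →ₗ[ℂ] V} (hθ : Function.Involutive θ)
    (hθu : ∀ x ∈ u, θ x ∈ u) (hk : ∀ x, x ∈ k ↔ x ∈ u ∧ θ x = x)
    (hm : ∀ x, x ∈ m ↔ x ∈ u ∧ θ x = -x) : k ⊔ m = u := by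
  refine le_antisymm (sup_le (fun x hx => ((hk x).mp hx).1) (fun x hx => ((hm x).mp hx).1))
    fun x hx => ?_
  have hfix : (2⁻¹ : ℝ) • (x + θ x) ∈ k := by
    refine (hk _).mpr ⟨u.smul_mem _ (u.add_mem hx (hθu x hx)), ?_⟩
    rw [LinearMap.map_smul_of_tower, map_add, hθ, add_comm]
  have hanti : (2⁻¹ : ℝ) • (x - θ x) ∈ m := by
    refine (hm _).mpr ⟨u.smul_mem _ (u.sub_mem hx (hθu x hx)), ?_⟩
    rw [LinearMap.map_smul_of_tower, map_sub, hθ, ← smul_neg, neg_sub]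
  convert Submodule.add_mem_sup hfix hanti using 1
  module

/-- The space `g_θ = k ⊕ i•m` of the statement (the c-dual of `k ⊕ m`). -/
def cDual (k m : Submodule ℝ V) : Submodule ℝ V := k ⊔ m.map (smulI V)

lemma mem_cDual {k m : Submodule ℝ V} {x : V} :
    x ∈ cDual k m ↔ ∃ a ∈ k, ∃ b ∈ m, a + I • b = x := by
  simp only [cDual, Submodule.mem_sup, Submodule.mem_map, smulI_apply]
  constructor
  · rintro ⟨a, ha, _, ⟨b, hb, rfl⟩, rfl⟩
    exact ⟨a, ha, b, hb, rfl⟩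
  · rintro ⟨a, ha, b, hb, rfl⟩
    exact ⟨a, ha, _, ⟨b, hb, rfl⟩, rfl⟩

lemma cDual_sup_map_smulI (k m : Submodule ℝ V) :
    cDual k m ⊔ (cDual k m).map (smulI V) = k ⊔ m ⊔ (k ⊔ m).map (smulI V) := by
  simp only [cDual, Submodule.map_sup, map_smulI_map_smulI]
  ac_rfl

lemma cDual_inf_map_smulI_eq_bot {k m : Submodule ℝ V} (hkm : Disjoint k m)
    (hreal : (k ⊔ m) ⊓ (k ⊔ m).map (smulI V) = ⊥) :
    cDual k m ⊓ (cDual k m).map (smulI V) = ⊥ := by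
  rw [Submodule.eq_bot_iff]
  rintro _ ⟨hx, hJx⟩
  obtain ⟨a, ha, b, hb, rfl⟩ := mem_cDual.mp hx
  obtain ⟨_, hy, hyx⟩ := Submodule.mem_map.mp hJx
  obtain ⟨c, hc, d, hd, rfl⟩ := mem_cDual.mp hy
  have hsplit : a + d = I • (c - b) := by
    simp only [smulI_apply, smul_add, smul_smul, I_mul_I, neg_one_smul] at hyx
    rw [smul_sub, eq_sub_iff_add_eq, add_right_comm, ← hyx]
    abel
  have had : a + d = 0 := by
    have : a + d ∈ (k ⊔ m) ⊓ (k ⊔ m).map (smulI V) :=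
      ⟨Submodule.add_mem_sup ha hd, hsplit ▸ Submodule.mem_map_of_mem
        (Submodule.sub_mem _ (Submodule.mem_sup_left hc) (Submodule.mem_sup_right hb))⟩
    rwa [hreal, Submodule.mem_bot] at this
  have ha0 : a = 0 := Submodule.disjoint_def.mp hkm a ha
    (eq_neg_of_add_eq_zero_left had ▸ m.neg_mem hd)
  have hbc : b = c := by
    rw [had, eq_comm, smul_eq_zero] at hsplit
    exact (sub_eq_zero.mp (hsplit.resolve_left I_ne_zero)).symm
  have hb0 : b = 0 := Submodule.disjoint_def.mp hkm b (hbc ▸ hc) hb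
  rw [ha0, hb0, smul_zero, add_zero]

lemma lie_mem_cDual {g : Type*} [LieRing g] [LieAlgebra ℂ g] {k m : Submodule ℝ g}
    (hkk : ∀ x ∈ k, ∀ y ∈ k, ⁅x, y⁆ ∈ k) (hkm : ∀ x ∈ k, ∀ y ∈ m, ⁅x, y⁆ ∈ m)
    (hmm : ∀ x ∈ m, ∀ y ∈ m, ⁅x, y⁆ ∈ k) {x y : g} (hx : x ∈ cDual k m) (hy : y ∈ cDual k m) :
    ⁅x, y⁆ ∈ cDual k m := by
  obtain ⟨a, ha, b, hb, rfl⟩ := mem_cDual.mp hx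
  obtain ⟨c, hc, d, hd, rfl⟩ := mem_cDual.mp hy
  have hlie : ⁅a + I • b, c + I • d⁆ = (⁅a, c⁆ - ⁅b, d⁆) + I • (⁅a, d⁆ - ⁅c, b⁆) := by
    simp only [lie_add, add_lie, lie_smul, smul_lie, smul_sub, ← lie_skew c b]
    linear_combination (norm := module) I_mul_I • ⁅b, d⁆
  rw [hlie]
  exact mem_cDual.mpr ⟨_, k.sub_mem (hkk a ha c hc) (hmm b hb d hd),
    _, m.sub_mem (hkm a ha d hd) (hkm c hc b hb), rfl⟩

lemma lie_mem_fixed_antifixed {g : Type*} [LieRing g] [LieAlgebra ℂ g] {u k m : Submodule ℝ g}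
    (θ : g →ₗ⁅ℂ⁆ g) (hu : ∀ x ∈ u, ∀ y ∈ u, ⁅x, y⁆ ∈ u)
    (hk : ∀ x, x ∈ k ↔ x ∈ u ∧ θ x = x) (hm : ∀ x, x ∈ m ↔ x ∈ u ∧ θ x = -x) :
    (∀ x ∈ k, ∀ y ∈ k, ⁅x, y⁆ ∈ k) ∧ (∀ x ∈ k, ∀ y ∈ m, ⁅x, y⁆ ∈ m) ∧
      (∀ x ∈ m, ∀ y ∈ m, ⁅x, y⁆ ∈ k) := by
  refine ⟨fun x hx y hy => ?_, fun x hx y hy => ?_, fun x hx y hy => ?_⟩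
  · rw [hk] at hx hy ⊢
    exact ⟨hu x hx.1 y hy.1, by rw [LieHom.map_lie, hx.2, hy.2]⟩
  · rw [hk] at hx
    rw [hm] at hy ⊢
    exact ⟨hu x hx.1 y hy.1, by rw [LieHom.map_lie, hx.2, hy.2, lie_neg]⟩
  · rw [hm] at hx hy
    rw [hk]
    exact ⟨hu x hx.1 y hy.1, by rw [LieHom.map_lie, hx.2, hy.2, neg_lie, lie_neg, neg_neg]⟩

lemma LinearMap.IsSymm.apply_add_I_smul_sub_I_smul {B : LinearMap.BilinForm ℂ V}
    (hB : LinearMap.IsSymm B) (a b : V) : B (a + I • b) (a - I • b) = B a a + B b b := by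
  have hba : B b a = B a b := (hB.eq a b).symm
  simp only [map_add, map_sub, map_smul, LinearMap.add_apply, LinearMap.smul_apply, smul_eq_mul,
    hba]
  linear_combination (-B b b) * I_mul_I

def IsRealNegOn (Q : V → ℂ) (p : Submodule ℝ V) : Prop :=
  ∀ x ∈ p, x ≠ 0 → (Q x).re < 0 ∧ (Q x).im = 0

lemma IsRealNegOn.re_nonpos_and_im_eq_zero {Q : V → ℂ} {p : Submodule ℝ V}
    (hQ : IsRealNegOn Q p) (hQ0 : Q 0 = 0) {x : V} (hx : x ∈ p) : (Q x).re ≤ 0 ∧ (Q x).im = 0 := by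
  rcases eq_or_ne x 0 with rfl | hx0
  · simp [hQ0]
  · exact ⟨(hQ x hx hx0).1.le, (hQ x hx hx0).2⟩

lemma isRealNegOn_cDual {k m : Submodule ℝ V} {B : LinearMap.BilinForm ℂ V}
    (hB : LinearMap.IsSymm B) {θ : V →ₗ[ℂ] V} (hk : ∀ x ∈ k, θ x = x) (hm : ∀ x ∈ m, θ x = -x)
    (hneg : IsRealNegOn (fun x => B x x) (k ⊔ m)) :
    IsRealNegOn (fun x => B x (θ x)) (cDual k m) := by
  intro x hx hx0
  obtain ⟨a, ha, b, hb, rfl⟩ := mem_cDual.mp hx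
  have hθx : θ (a + I • b) = a - I • b := by
    rw [map_add, map_smul, hk a ha, hm b hb, smul_neg, sub_eq_add_neg]
  have haa := hneg.re_nonpos_and_im_eq_zero (by simp) (Submodule.mem_sup_left ha)
  have hbb := hneg.re_nonpos_and_im_eq_zero (by simp) (Submodule.mem_sup_right hb)
  simp only [hθx, hB.apply_add_I_smul_sub_I_smul, add_re, add_im, haa.2, hbb.2, add_zero,
    and_true]
  rcases eq_or_ne a 0 with rfl | ha0
  · have hb0 : b ≠ 0 := by rintro rfl; simp at hx0
    linarith [(hneg b (Submodule.mem_sup_right hb) hb0).1]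
  · linarith [(hneg a (Submodule.mem_sup_left ha) ha0).1]

end

theorem compact_involution_gives_real_form_with_cartan_involution_general
    {g : Type*} [LieRing g] [LieAlgebra ℂ g]
    (u : Submodule ℝ g)
    (hub : ∀ x ∈ u, ∀ y ∈ u, ⁅x, y⁆ ∈ u)
    (J : g →ₗ[ℝ] g) (hJ : ∀ x : g, J x = (Complex.I : ℂ) • x)
    (hreal₁ : u ⊓ u.map J = ⊥) (hreal₂ : u ⊔ u.map J = ⊤)
    (hcompact : ∀ x ∈ u, x ≠ 0 →
      (killingForm ℂ g x x).re < 0 ∧ (killingForm ℂ g x x).im = 0)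
    (θ : g →ₗ⁅ℂ⁆ g) (hθinv : ∀ x, θ (θ x) = x)
    (hθu : ∀ x ∈ u, θ x ∈ u)
    (k m : Submodule ℝ g)
    (hk : ∀ x : g, x ∈ k ↔ x ∈ u ∧ θ x = x)
    (hm : ∀ x : g, x ∈ m ↔ x ∈ u ∧ θ x = -x) :
    let gθ := k ⊔ m.map J
    (∀ x ∈ gθ, ∀ y ∈ gθ, ⁅x, y⁆ ∈ gθ) ∧
    (gθ ⊓ gθ.map J = ⊥ ∧ gθ ⊔ gθ.map J = ⊤) ∧
    (∀ x ∈ gθ, x ≠ 0 →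
      (killingForm ℂ g x (θ x)).re < 0 ∧ (killingForm ℂ g x (θ x)).im = 0) := by
  obtain rfl : J = smulI g := LinearMap.ext hJ
  have hθk : ∀ x ∈ k, θ x = x := fun x hx => ((hk x).mp hx).2
  have hθm : ∀ x ∈ m, θ x = -x := fun x hx => ((hm x).mp hx).2
  have hkmu : k ⊔ m = u := sup_eq_of_involutive (θ := (θ : g →ₗ[ℂ] g)) hθinv hθu hk hm
  obtain ⟨hkk, hkm, hmm⟩ := lie_mem_fixed_antifixed θ hub hk hm
  refine ⟨fun x hx y hy => lie_mem_cDual hkk hkm hmm hx hy, ⟨?_, ?_⟩,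
    isRealNegOn_cDual (LieModule.traceForm_isSymm ℂ g g) (θ := (θ : g →ₗ[ℂ] g)) hθk hθm
      (hkmu ▸ hcompact)⟩
  · exact cDual_inf_map_smulI_eq_bot (disjoint_of_apply_eq_self_of_apply_eq_neg hθk hθm)
      (hkmu ▸ hreal₁)
  · exact (cDual_sup_map_smulI k m).trans (by rw [hkmu, hreal₂])

/-- Let `u` be a compact real form of the complex semisimple Lie algebra `g`
(a real subalgebra with `u ∩ iu = 0`, `u + iu = g`, on which the Killing form is
negative definite), and let `θ` be an involutive automorphism of `u` (extended
ℂ-linearly to `g`), with eigenspaces `k = u^θ` and `m` (the `−1`-eigenspace in `u`).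
Then `g_θ = k ⊕ i·m` is a real form of `g`: it is a real Lie subalgebra whose
complexification is `g` (`g_θ ∩ i·g_θ = 0`, `g_θ + i·g_θ = g`), and `θ` restricted to
`g_θ` is a Cartan involution: `−B(X, θX)` is positive definite on `g_θ` (equivalently
`B(X, θX)` is real and negative for `0 ≠ X ∈ g_θ`). -/
theorem compact_involution_gives_real_form_with_cartan_involution
    {g : Type*} [LieRing g] [LieAlgebra ℂ g] [FiniteDimensional ℂ g]
    [LieAlgebra.IsSemisimple ℂ g]
    (u : Submodule ℝ g)
    (hub : ∀ x ∈ u, ∀ y ∈ u, ⁅x, y⁆ ∈ u)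
    (J : g →ₗ[ℝ] g) (hJ : ∀ x : g, J x = (Complex.I : ℂ) • x)
    (hreal₁ : u ⊓ u.map J = ⊥) (hreal₂ : u ⊔ u.map J = ⊤)
    (hcompact : ∀ x ∈ u, x ≠ 0 →
      (killingForm ℂ g x x).re < 0 ∧ (killingForm ℂ g x x).im = 0)
    (θ : g →ₗ⁅ℂ⁆ g) (hθinv : ∀ x, θ (θ x) = x)
    (hθu : ∀ x ∈ u, θ x ∈ u)
    (k m : Submodule ℝ g)
    (hk : ∀ x : g, x ∈ k ↔ x ∈ u ∧ θ x = x)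
    (hm : ∀ x : g, x ∈ m ↔ x ∈ u ∧ θ x = -x) :
    let gθ := k ⊔ m.map J
    (∀ x ∈ gθ, ∀ y ∈ gθ, ⁅x, y⁆ ∈ gθ) ∧
    (gθ ⊓ gθ.map J = ⊥ ∧ gθ ⊔ gθ.map J = ⊤) ∧
    (∀ x ∈ gθ, x ≠ 0 →
      (killingForm ℂ g x (θ x)).re < 0 ∧ (killingForm ℂ g x (θ x)).im = 0) :=
  compact_involution_gives_real_form_with_cartan_involution_general u hub J hJ hreal₁ hreal₂
    hcompact θ hθinv hθu k m hk hm
end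

section
/- Let 0 < q < 1, t ∈ ℝ, and let B_{t,V} be the 2×2 matrix ((i t q^{-1}, −q^{-1/2}), (q^{-1/2}, i t q)) (the action of B_t = F − q^{-2}EK^{-1} + itK^{-1} on the fundamental representation of U_q(sl_2)). If a 2×2 complex matrix C of the form ((a, b), (c, 0)) with bc = −q^{-1} commutes with B_{t,V}, then C = ± ((i t (q^{-1} − q), −q^{-1/2}), (q^{-1/2}, 0)). Moreover, the singular values of this C are q^{λ − 1/2} and q^{−λ − 1/2}, where λ ∈ ℝ is the unique real number with t = q^{-1/2} (q^{-λ} − q^{λ})/(q^{-1} − q). -/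
/-!
Comparing the `(0,0)` and `(0,1)` entries of `C B = B C` gives `c = -b` and
`a q^{-1/2} = b (itq - itq⁻¹)`; with `b c = -q⁻¹` this leaves `b = ∓q^{-1/2}`.
Since `q^{-λ} - q^λ = -2 sinh (λ log q)`, the parameter `λ` exists and is unique.
Writing `t (q⁻¹ - q) = q^{-1/2} (q^{-λ} - q^λ)`, the matrix `Cᴴ C` has trace
`q^{2λ-1} + q^{-2λ-1}` and determinant `q^{-2}`, which pins down its two eigenvalues.
-/

open Matrix

theorem Matrix.spectrum_fin_two_eq {K : Type*} [Field K] (M : Matrix (Fin 2) (Fin 2) K)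
    {μ ν : K} (htrace : M.trace = μ + ν) (hdet : M.det = μ * ν) : spectrum K M = {μ, ν} := by
  ext x
  have hchar : M.charpoly.eval x = (x - μ) * (x - ν) := by
    simp only [charpoly_fin_two, htrace, hdet, Polynomial.eval_add, Polynomial.eval_sub,
      Polynomial.eval_mul, Polynomial.eval_pow, Polynomial.eval_X, Polynomial.eval_C]
    ring
  rw [mem_spectrum_iff_isRoot_charpoly, Polynomial.IsRoot, hchar, mul_eq_zero, sub_eq_zero,
    sub_eq_zero, Set.mem_insert_iff, Set.mem_singleton_iff]

theorem eq_or_eq_neg_of_mul_comm_fin_two {K : Type*} [Field K] {a b c x y s : K} (hs : s ≠ 0)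
    (hbc : b * c = -s ^ 2)
    (hcomm : !![a, b; c, 0] * !![x, -s; s, y] = !![x, -s; s, y] * !![a, b; c, 0]) :
    !![a, b; c, 0] = !![x - y, -s; s, 0] ∨ !![a, b; c, 0] = -!![x - y, -s; s, 0] := by
  have h00 := congrFun₂ hcomm 0 0
  have h01 := congrFun₂ hcomm 0 1
  simp only [Fin.isValue, Matrix.mul_apply, of_apply, cons_val', cons_val_fin_one, cons_val_zero,
    Fin.sum_univ_two, cons_val_one, neg_mul, mul_neg, mul_zero, add_zero] at h00 h01
  have hc : c = -b := mul_right_cancel₀ hs (by linear_combination h00)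
  have ha : a * s = b * (y - x) := by linear_combination -h01
  have hb : (b + s) * (b - s) = 0 := by linear_combination -hbc + b * hc
  rcases mul_eq_zero.mp hb with hb | hb
  · left
    have hb : b = -s := eq_neg_of_add_eq_zero_left hb
    have ha : a = x - y := mul_right_cancel₀ hs (by rw [ha, hb]; ring)
    rw [ha, hb, hc, hb, neg_neg]
  · right
    have hb : b = s := sub_eq_zero.mp hb
    have ha : a = -(x - y) := mul_right_cancel₀ hs (by rw [ha, hb]; ring)
    rw [ha, hc, hb]
    ext i j
    fin_cases i <;> fin_cases j <;> simp

theorem rpow_neg_sub_rpow_eq_sinh {q : ℝ} (hq : 0 < q) (l : ℝ) :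
    q ^ (-l) - q ^ l = -2 * Real.sinh (l * Real.log q) := by
  rw [Real.sinh_eq, Real.rpow_def_of_pos hq, Real.rpow_def_of_pos hq]
  ring_nf

theorem existsUnique_rpow_neg_sub_rpow_eq {q : ℝ} (hq0 : 0 < q) (hq1 : q ≠ 1) (T : ℝ) :
    ∃! l : ℝ, q ^ (-l) - q ^ l = T := by
  have hlog : Real.log q ≠ 0 := Real.log_ne_zero_of_pos_of_ne_one hq0 hq1
  have hbij : Function.Bijective fun l : ℝ => -2 * Real.sinh (l * Real.log q) :=
    (mulLeft_bijective₀ (-2 : ℝ) (by norm_num)).comp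
      (Real.sinh_bijective.comp (mulRight_bijective₀ _ hlog))
  simpa only [rpow_neg_sub_rpow_eq_sinh hq0] using hbij.existsUnique T

theorem rpow_neg_half_sq {q : ℝ} (hq : 0 ≤ q) : (q ^ (-(1 / 2 : ℝ))) ^ 2 = q⁻¹ := by
  rw [← Real.rpow_mul_natCast hq, ← Real.rpow_neg_one]
  norm_num

theorem rpow_two_mul_sub_one {q : ℝ} (hq : 0 < q) (x : ℝ) :
    q ^ (2 * x - 1) = (q ^ (-(1 / 2 : ℝ)) * q ^ x) ^ 2 := by
  rw [← Real.rpow_add hq, ← Real.rpow_mul_natCast hq.le]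
  ring_nf

theorem spectrum_conjTranspose_mul_self_eq {r s μ ν : ℝ} (hsum : μ + ν = r ^ 2 + 2 * s ^ 2)
    (hprod : μ * ν = s ^ 4) :
    spectrum ℂ ((!![Complex.I * r, -s; s, 0])ᴴ * !![Complex.I * r, -(s : ℂ); s, 0]) =
      {(μ : ℂ), (ν : ℂ)} := by
  have hsum : (μ : ℂ) + ν = r ^ 2 + 2 * s ^ 2 := by exact_mod_cast hsum
  have hprod : (μ : ℂ) * ν = s ^ 4 := by exact_mod_cast hprod
  apply Matrix.spectrum_fin_two_eq
  · simp only [trace_fin_two, Fin.isValue, Matrix.mul_apply, conjTranspose_apply, of_apply,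
      cons_val', cons_val_zero, cons_val_fin_one, RCLike.star_def, Fin.sum_univ_two, map_mul,
      Complex.conj_I, Complex.conj_ofReal, neg_mul, cons_val_one, map_neg, mul_neg, neg_neg,
      map_zero, mul_zero, add_zero]
    linear_combination (-(r : ℂ) ^ 2) * Complex.I_sq - hsum
  · simp only [det_mul, det_conjTranspose, det_fin_two, Fin.isValue, of_apply, cons_val',
      cons_val_zero, cons_val_fin_one, cons_val_one, mul_zero, neg_mul, sub_neg_eq_add, zero_add,
      star_mul', RCLike.star_def, Complex.conj_ofReal]
    linear_combination -hprod

/-- Let `0 < q < 1`, `t ∈ ℝ`, and let `B` be the action of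
`B_t = F − q⁻²EK⁻¹ + itK⁻¹` on the fundamental representation of `U_q(sl₂)`, i.e.
`B = ((itq⁻¹, −q^{−1/2}), (q^{−1/2}, itq))`.  If a 2×2 complex matrix
`C = ((a,b),(c,0))` with `bc = −q⁻¹` commutes with `B`, then
`C = ± ((it(q⁻¹−q), −q^{−1/2}), (q^{−1/2}, 0))`.  Moreover there is a unique `λ ∈ ℝ`
with `t = q^{−1/2}(q^{−λ} − q^{λ})/(q⁻¹ − q)`, and for it the singular values of `C`
are `q^{λ−1/2}` and `q^{−λ−1/2}` (i.e. the spectrum of `Cᴴ C` is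
`{q^{2λ−1}, q^{−2λ−1}}`). -/
theorem rank_one_cylinder_matrix (q : ℝ) (hq0 : 0 < q) (hq1 : q < 1) (t : ℝ)
    (a b c : ℂ) (hbc : b * c = -(q : ℂ)⁻¹)
    (C : Matrix (Fin 2) (Fin 2) ℂ) (hC : C = !![a, b; c, 0])
    (B : Matrix (Fin 2) (Fin 2) ℂ)
    (hB : B = !![Complex.I * t * (q : ℂ)⁻¹, -((q ^ (-(1/2 : ℝ)) : ℝ) : ℂ);
                 ((q ^ (-(1/2 : ℝ)) : ℝ) : ℂ), Complex.I * t * (q : ℂ)])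
    (hcomm : C * B = B * C) :
    (C = !![Complex.I * t * ((q : ℂ)⁻¹ - (q : ℂ)), -((q ^ (-(1/2 : ℝ)) : ℝ) : ℂ);
            ((q ^ (-(1/2 : ℝ)) : ℝ) : ℂ), 0] ∨
     C = -!![Complex.I * t * ((q : ℂ)⁻¹ - (q : ℂ)), -((q ^ (-(1/2 : ℝ)) : ℝ) : ℂ);
            ((q ^ (-(1/2 : ℝ)) : ℝ) : ℂ), 0]) ∧
    (∃! l : ℝ, t = q ^ (-(1/2 : ℝ)) * (q ^ (-l) - q ^ l) / (q⁻¹ - q)) ∧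
    (∀ l : ℝ, t = q ^ (-(1/2 : ℝ)) * (q ^ (-l) - q ^ l) / (q⁻¹ - q) →
      spectrum ℂ (C.conjTranspose * C) =
        {((q ^ (2 * l - 1) : ℝ) : ℂ), ((q ^ (-(2 * l) - 1) : ℝ) : ℂ)}) := by
  set s : ℝ := q ^ (-(1 / 2 : ℝ))
  have hs : 0 < s := Real.rpow_pos_of_pos hq0 _
  have hs2 : (s : ℂ) ^ 2 = (q : ℂ)⁻¹ := by exact_mod_cast rpow_neg_half_sq hq0.le
  have hd : q⁻¹ - q ≠ 0 := (sub_pos.mpr (hq1.trans ((one_lt_inv₀ hq0).mpr hq1))).ne'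
  have hCpm : C = !![Complex.I * t * ((q : ℂ)⁻¹ - q), -(s : ℂ); s, 0] ∨
      C = -!![Complex.I * t * ((q : ℂ)⁻¹ - q), -(s : ℂ); s, 0] := by
    subst hC hB
    rw [mul_sub]
    exact eq_or_eq_neg_of_mul_comm_fin_two (by exact_mod_cast hs.ne') (by rw [hbc, hs2]) hcomm
  have hl_iff (l : ℝ) : t = s * (q ^ (-l) - q ^ l) / (q⁻¹ - q) ↔
      q ^ (-l) - q ^ l = t * (q⁻¹ - q) / s := by
    rw [eq_div_iff hd, eq_div_iff hs.ne', eq_comm, mul_comm]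
  refine ⟨hCpm, (existsUnique_congr hl_iff).mpr
    (existsUnique_rpow_neg_sub_rpow_eq hq0 hq1.ne _), fun l hl => ?_⟩
  have hCC : Cᴴ * C = (!![Complex.I * (t * (q⁻¹ - q) : ℝ), -(s : ℂ); s, 0])ᴴ *
      !![Complex.I * (t * (q⁻¹ - q) : ℝ), -(s : ℂ); s, 0] := by
    push_cast
    rcases hCpm with rfl | rfl <;> simp only [conjTranspose_neg, neg_mul_neg, mul_assoc]
  have hr : t * (q⁻¹ - q) = s * (q ^ (-l) - q ^ l) := by rw [hl, div_mul_cancel₀ _ hd]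
  have hinv : q ^ l * q ^ (-l) = 1 := by
    rw [← Real.rpow_add hq0, add_neg_cancel, Real.rpow_zero]
  rw [hCC, rpow_two_mul_sub_one hq0, show -(2 * l) - 1 = 2 * -l - 1 by ring,
    rpow_two_mul_sub_one hq0]
  apply spectrum_conjTranspose_mul_self_eq
  · rw [hr]
    linear_combination 2 * s ^ 2 * hinv
  · linear_combination s ^ 4 * (q ^ l * q ^ (-l) + 1) * hinv
end

section
/- Let 0 < q < 1 and let A be the universal *-algebra generated by F and a positive invertible self-adjoint K with relations KF = q^{-2}FK, K F* = q² F* K, and F*F − q² F F* = (1 + K^{-2})/(q − q^{-1}). For each r ∈ ℝ define on the pre-Hilbert space with orthonormal basis (e_n)_{n∈ℕ} the operators K e_n = q^{-r+2n} e_n and q^{1/2}(q^{-1} − q) F e_n = q^{-n} ((1 − q^{2n})(1 + q^{2r+2−2n}))^{1/2} e_{n−1} (with F e_0 = 0). Then these operators satisfy the defining relations of A and F* acts as the adjoint, so they define a *-representation π_r of A. -/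
noncomputable section

open Finsupp

variable (q r : ℝ)

/-- The diagonal operator `K e_n = q^{-r+2n} e_n` on `ℂ[ℕ]`. -/
def Kop : (ℕ →₀ ℂ) →ₗ[ℂ] (ℕ →₀ ℂ) :=
  Finsupp.lsum ℂ fun n => LinearMap.toSpanSingleton ℂ _
    (((q ^ (-r + 2 * (n : ℝ)) : ℝ) : ℂ) • Finsupp.single n 1)

/-- The inverse diagonal operator `K⁻¹ e_n = q^{r-2n} e_n`. -/
def Kinvop : (ℕ →₀ ℂ) →ₗ[ℂ] (ℕ →₀ ℂ) :=
  Finsupp.lsum ℂ fun n => LinearMap.toSpanSingleton ℂ _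
    (((q ^ (r - 2 * (n : ℝ)) : ℝ) : ℂ) • Finsupp.single n 1)

/-- The coefficient `c_n` with `q^{1/2}(q⁻¹−q) F e_n = q^{-n}((1−q^{2n})(1+q^{2r+2−2n}))^{1/2} e_{n−1}`. -/
def Fcoef (n : ℕ) : ℝ :=
  q ^ (-(n : ℝ)) * Real.sqrt ((1 - q ^ (2 * (n : ℝ))) * (1 + q ^ (2 * r + 2 - 2 * (n : ℝ)))) /
    (q ^ ((1 : ℝ) / 2) * (q⁻¹ - q))

/-- The lowering operator `F e_n = c_n e_{n-1}` (note `c_0 = 0`). -/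
def Fop : (ℕ →₀ ℂ) →ₗ[ℂ] (ℕ →₀ ℂ) :=
  Finsupp.lsum ℂ fun n => LinearMap.toSpanSingleton ℂ _
    (((Fcoef q r n : ℝ) : ℂ) • Finsupp.single (n - 1) 1)

/-- The raising operator `F* e_n = c_{n+1} e_{n+1}` (the formal adjoint of `F`). -/
def Fstarop : (ℕ →₀ ℂ) →ₗ[ℂ] (ℕ →₀ ℂ) :=
  Finsupp.lsum ℂ fun n => LinearMap.toSpanSingleton ℂ _
    (((Fcoef q r (n + 1) : ℝ) : ℂ) • Finsupp.single (n + 1) 1)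

/-- The inner product `⟨v, w⟩ = ∑ conj(v_n) w_n` on `ℂ[ℕ]`. -/
def innerF (v w : ℕ →₀ ℂ) : ℂ := v.sum fun n a => (starRingEnd ℂ a) * w n

/-! All four operators are weighted shifts `e_n ↦ c_n e_{σ n}`, and weighted shifts compose by
composing the shifts and multiplying the weights. So each relation becomes an identity between
weights: `K_{n+1} = q² K_n` for the relations with `K`, and, since `c_0 = 0` makes `F*F` and `FF*`
diagonal with entries `c_n²` and `c_{n+1}²`, the scalar identity
`c_n² − q² c_{n+1}² = (q − q⁻¹)⁻¹ (1 + q^{2r−4n})` for the third one. Adjointness is a comparison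
of matrix coefficients. -/

section WeightedShift

variable {ι R : Type*} [CommSemiring R]

def weightedShift (σ : ι → ι) (c : ι → R) : (ι →₀ R) →ₗ[R] (ι →₀ R) :=
  Finsupp.lsum R fun i => LinearMap.toSpanSingleton R _ (c i • Finsupp.single (σ i) 1)

@[simp]
lemma weightedShift_single (σ : ι → ι) (c : ι → R) (i : ι) (b : R) :
    weightedShift σ c (single i b) = single (σ i) (c i * b) := by
  simp [weightedShift, mul_comm]

lemma weightedShift_comp (σ τ : ι → ι) (c d : ι → R) :
    weightedShift σ c ∘ₗ weightedShift τ d = weightedShift (σ ∘ τ) (fun i => c (τ i) * d i) :=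
  lhom_ext fun i b => by
    simp only [LinearMap.comp_apply, weightedShift_single, Function.comp_apply, mul_assoc]

lemma smul_weightedShift (a : R) (σ : ι → ι) (c : ι → R) :
    a • weightedShift σ c = weightedShift σ (fun i => a * c i) :=
  lhom_ext fun i b => by
    simp only [LinearMap.smul_apply, weightedShift_single, smul_single, smul_eq_mul, mul_assoc]

lemma weightedShift_add (σ : ι → ι) (c d : ι → R) :
    weightedShift σ c + weightedShift σ d = weightedShift σ (c + d) :=
  lhom_ext fun i b => by simp [add_mul]

lemma weightedShift_id_one : weightedShift (id : ι → ι) (1 : ι → R) = LinearMap.id :=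
  lhom_ext fun i b => by simp

lemma weightedShift_congr {σ τ : ι → ι} {c d : ι → R} (hcd : c = d)
    (hστ : ∀ i, c i ≠ 0 → σ i = τ i) : weightedShift σ c = weightedShift τ d := by
  subst hcd
  refine lhom_ext fun i b => ?_
  by_cases hc : c i = 0
  · simp [hc]
  · simp [hστ i hc]

end WeightedShift

lemma weightedShift_sub {ι R : Type*} [CommRing R] (σ : ι → ι) (c d : ι → R) :
    weightedShift σ c - weightedShift σ d = weightedShift σ (c - d) :=
  lhom_ext fun i b => by simp [sub_mul]

lemma innerF_add_left (v v' w : ℕ →₀ ℂ) : innerF (v + v') w = innerF v w + innerF v' w :=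
  sum_add_index (fun _ _ => by simp) fun _ _ _ _ => by rw [map_add, add_mul]

lemma innerF_add_right (v w w' : ℕ →₀ ℂ) : innerF v (w + w') = innerF v w + innerF v w' := by
  simp only [innerF, ← sum_add, coe_add, Pi.add_apply, mul_add]

lemma innerF_single_left (m : ℕ) (a : ℂ) (w : ℕ →₀ ℂ) :
    innerF (single m a) w = star a * w m :=
  sum_single_index (by simp)

lemma innerF_single_weightedShift (σ : ℕ → ℕ) (c : ℕ → ℂ) (m n : ℕ) (a b : ℂ) :
    innerF (single m a) (weightedShift σ c (single n b)) =
      star a * b * if m = σ n then c n else 0 := by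
  rw [innerF_single_left, weightedShift_single, single_eq_pi_single, Pi.single_apply]
  split_ifs <;> ring

lemma innerF_weightedShift_eq {σ τ : ℕ → ℕ} {c d : ℕ → ℂ}
    (hcoef : ∀ m n, (if m = σ n then c n else 0) = if τ m = n then star (d m) else 0)
    (v w : ℕ →₀ ℂ) : innerF v (weightedShift σ c w) = innerF (weightedShift τ d v) w := by
  induction v using Finsupp.induction_linear with
  | zero => simp [innerF]
  | add v v' hv hv' => rw [map_add, innerF_add_left, innerF_add_left, hv, hv']
  | single m a =>
    induction w using Finsupp.induction_linear with
    | zero => simp [innerF]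
    | add w w' hw hw' => rw [map_add, innerF_add_right, innerF_add_right, hw, hw']
    | single n b =>
      rw [innerF_single_weightedShift, hcoef, weightedShift_single, innerF_single_left,
        single_eq_pi_single, Pi.single_apply, star_mul]
      split_ifs <;> ring

lemma Kop_eq : Kop q r = weightedShift id fun n : ℕ => ((q ^ (-r + 2 * (n : ℝ)) : ℝ) : ℂ) := rfl

lemma Kinvop_eq : Kinvop q r = weightedShift id fun n : ℕ => ((q ^ (r - 2 * (n : ℝ)) : ℝ) : ℂ) := rfl

lemma Fop_eq : Fop q r = weightedShift (· - 1) fun n => ((Fcoef q r n : ℝ) : ℂ) := rfl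

lemma Fstarop_eq : Fstarop q r = weightedShift (· + 1) fun n => ((Fcoef q r (n + 1) : ℝ) : ℂ) :=
  rfl

lemma Fcoef_zero : Fcoef q r 0 = 0 := by
  simp [Fcoef]

lemma rpow_add_two_mul_natCast_succ {q : ℝ} (hq : 0 < q) (a : ℝ) (n : ℕ) :
    q ^ (a + 2 * ((n + 1 : ℕ) : ℝ)) = q ^ (a + 2 * (n : ℝ)) * q ^ 2 := by
  rw [← Real.rpow_two, ← Real.rpow_add hq]
  push_cast
  ring_nf

lemma Fcoef_sq (hq0 : 0 < q) (hq1 : q < 1) (n : ℕ) :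
    Fcoef q r n ^ 2 = (1 - q ^ (2 * (n : ℝ))) * (q ^ (2 * (n : ℝ)) + q ^ (2 * r + 2)) /
      (q ^ (2 * (n : ℝ))) ^ 2 / (q * (q⁻¹ - q) ^ 2) := by
  have hx1 : q ^ (2 * (n : ℝ)) ≤ 1 := Real.rpow_le_one hq0.le hq1.le (by positivity)
  have hpow : q ^ (2 * r + 2 - 2 * (n : ℝ)) = q ^ (2 * r + 2) / q ^ (2 * (n : ℝ)) :=
    Real.rpow_sub hq0 _ _
  have hneg : (q ^ (-(n : ℝ))) ^ 2 = (q ^ (2 * (n : ℝ)))⁻¹ := by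
    rw [← Real.rpow_natCast, ← Real.rpow_mul hq0.le, ← Real.rpow_neg hq0.le]
    ring_nf
  have hhalf : (q ^ ((1 : ℝ) / 2)) ^ 2 = q := by
    rw [← Real.rpow_natCast, ← Real.rpow_mul hq0.le]
    norm_num
  have hnonneg : 0 ≤ (1 - q ^ (2 * (n : ℝ))) * (1 + q ^ (2 * r + 2 - 2 * (n : ℝ))) :=
    mul_nonneg (by linarith) (by positivity)
  rw [Fcoef, div_pow, mul_pow, mul_pow, Real.sq_sqrt hnonneg, hneg, hhalf, hpow]
  field_simp

lemma Fcoef_sq_sub_sq (hq0 : 0 < q) (hq1 : q < 1) (n : ℕ) :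
    Fcoef q r n ^ 2 - q ^ 2 * Fcoef q r (n + 1) ^ 2 =
      (q - q⁻¹)⁻¹ * (1 + q ^ (r - 2 * (n : ℝ)) * q ^ (r - 2 * (n : ℝ))) := by
  have hsucc : q ^ (2 * ((n + 1 : ℕ) : ℝ)) = q ^ (2 * (n : ℝ)) * q ^ 2 := by
    simpa using rpow_add_two_mul_natCast_succ hq0 0 n
  have hK : q ^ (r - 2 * (n : ℝ)) * q ^ (r - 2 * (n : ℝ)) =
      q ^ (2 * r + 2) / (q ^ (2 * (n : ℝ))) ^ 2 / q ^ 2 := by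
    rw [← Real.rpow_add hq0, ← Real.rpow_natCast, ← Real.rpow_natCast, ← Real.rpow_mul hq0.le,
      ← Real.rpow_sub hq0, ← Real.rpow_sub hq0]
    ring_nf
  have hq2 : 1 - q ^ 2 ≠ 0 := by nlinarith
  have hq2' : q ^ 2 - 1 ≠ 0 := by nlinarith
  rw [Fcoef_sq q r hq0 hq1, Fcoef_sq q r hq0 hq1, hsucc, hK]
  rw [show q⁻¹ - q = (1 - q ^ 2) / q by field_simp, show q - q⁻¹ = (q ^ 2 - 1) / q by field_simp]
  field_simp
  ring

lemma Fstarop_comp_Fop :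
    Fstarop q r ∘ₗ Fop q r = weightedShift id fun n => ((Fcoef q r n ^ 2 : ℝ) : ℂ) := by
  rw [Fstarop_eq, Fop_eq, weightedShift_comp]
  refine weightedShift_congr (funext fun n => ?_) fun n hn => ?_
  · rcases n with _ | n
    · simp [Fcoef_zero]
    · simp [sq]
  · rcases n with _ | n
    · simp [Fcoef_zero] at hn
    · simp

lemma Fop_comp_Fstarop :
    Fop q r ∘ₗ Fstarop q r = weightedShift id fun n => ((Fcoef q r (n + 1) ^ 2 : ℝ) : ℂ) := by
  rw [Fop_eq, Fstarop_eq, weightedShift_comp]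
  exact weightedShift_congr (funext fun n => by simp [sq]) fun n _ => by simp

lemma Kop_comp_Fop (hq0 : 0 < q) :
    Kop q r ∘ₗ Fop q r = ((q : ℂ) ^ (-2 : ℤ)) • (Fop q r ∘ₗ Kop q r) := by
  have hq : (q : ℂ) ≠ 0 := Complex.ofReal_ne_zero.mpr hq0.ne'
  rw [Kop_eq, Fop_eq, weightedShift_comp, weightedShift_comp, smul_weightedShift]
  refine weightedShift_congr (funext fun n => ?_) fun _ _ => rfl
  rcases n with _ | n
  · simp [Fcoef_zero]
  · simp only [id, Nat.add_sub_cancel, rpow_add_two_mul_natCast_succ hq0]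
    push_cast
    field_simp

lemma Kop_comp_Fstarop (hq0 : 0 < q) :
    Kop q r ∘ₗ Fstarop q r = ((q : ℂ) ^ 2) • (Fstarop q r ∘ₗ Kop q r) := by
  rw [Kop_eq, Fstarop_eq, weightedShift_comp, weightedShift_comp, smul_weightedShift]
  refine weightedShift_congr (funext fun n => ?_) fun _ _ => rfl
  simp only [id, rpow_add_two_mul_natCast_succ hq0]
  push_cast
  ring

lemma Fstarop_comp_Fop_sub (hq0 : 0 < q) (hq1 : q < 1) :
    Fstarop q r ∘ₗ Fop q r - ((q : ℂ) ^ 2) • (Fop q r ∘ₗ Fstarop q r) =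
      (((q - q⁻¹ : ℝ)⁻¹ : ℝ) : ℂ) • (LinearMap.id + Kinvop q r ∘ₗ Kinvop q r) := by
  rw [Fstarop_comp_Fop, Fop_comp_Fstarop, Kinvop_eq, weightedShift_comp, Function.id_comp,
    ← weightedShift_id_one, weightedShift_add, smul_weightedShift, smul_weightedShift,
    weightedShift_sub]
  congr 1
  funext n
  simp only [Pi.sub_apply, Pi.add_apply, Pi.one_apply, id]
  exact_mod_cast congrArg Complex.ofReal (Fcoef_sq_sub_sq q r hq0 hq1 n)

lemma Kop_comp_Kinvop (hq0 : 0 < q) : Kop q r ∘ₗ Kinvop q r = LinearMap.id := by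
  rw [Kop_eq, Kinvop_eq, weightedShift_comp, ← weightedShift_id_one]
  refine weightedShift_congr (funext fun n => ?_) fun _ _ => rfl
  simp [← Complex.ofReal_mul, ← Real.rpow_add hq0]

lemma Kinvop_comp_Kop (hq0 : 0 < q) : Kinvop q r ∘ₗ Kop q r = LinearMap.id := by
  rw [Kop_eq, Kinvop_eq, weightedShift_comp, ← weightedShift_id_one]
  refine weightedShift_congr (funext fun n => ?_) fun _ _ => rfl
  simp [← Complex.ofReal_mul, ← Real.rpow_add hq0]

lemma innerF_Fop (v w : ℕ →₀ ℂ) : innerF v (Fop q r w) = innerF (Fstarop q r v) w := by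
  rw [Fop_eq, Fstarop_eq]
  refine innerF_weightedShift_eq (fun m n => ?_) v w
  rcases n with _ | n
  · simp [Fcoef_zero]
  · by_cases h : m = n <;> simp [h]

lemma innerF_Kop (v w : ℕ →₀ ℂ) : innerF v (Kop q r w) = innerF (Kop q r v) w := by
  rw [Kop_eq]
  refine innerF_weightedShift_eq (fun m n => ?_) v w
  by_cases h : m = n <;> simp [h]

/-- For `0 < q < 1` and `r ∈ ℝ`, the operators `K e_n = q^{-r+2n} e_n` and
`q^{1/2}(q⁻¹−q) F e_n = q^{-n}((1−q^{2n})(1+q^{2r+2−2n}))^{1/2} e_{n−1}` on the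
pre-Hilbert space `ℂ[ℕ]` satisfy the defining relations of `U_q^{10}((su₂)_r)`:
`KF = q⁻²FK`, `KF* = q²F*K`, `F*F − q²FF* = (1 + K⁻²)/(q − q⁻¹)`, `K` is invertible,
and `F*`, `K` act as the adjoints of `F`, `K` respectively — so they define a
`*`-representation `π_r`. -/
theorem pi_r_is_star_representation (hq0 : 0 < q) (hq1 : q < 1) :
    (Kop q r ∘ₗ Fop q r = ((q : ℂ) ^ (-2 : ℤ)) • (Fop q r ∘ₗ Kop q r)) ∧
    (Kop q r ∘ₗ Fstarop q r = ((q : ℂ) ^ 2) • (Fstarop q r ∘ₗ Kop q r)) ∧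
    (Fstarop q r ∘ₗ Fop q r - ((q : ℂ) ^ 2) • (Fop q r ∘ₗ Fstarop q r) =
      (((q - q⁻¹ : ℝ)⁻¹ : ℝ) : ℂ) • (LinearMap.id + Kinvop q r ∘ₗ Kinvop q r)) ∧
    (Kop q r ∘ₗ Kinvop q r = LinearMap.id ∧ Kinvop q r ∘ₗ Kop q r = LinearMap.id) ∧
    (∀ v w : ℕ →₀ ℂ, innerF v (Fop q r w) = innerF (Fstarop q r v) w) ∧
    (∀ v w : ℕ →₀ ℂ, innerF v (Kop q r w) = innerF (Kop q r v) w) :=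
  ⟨Kop_comp_Fop q r hq0, Kop_comp_Fstarop q r hq0, Fstarop_comp_Fop_sub q r hq0 hq1,
    ⟨Kop_comp_Kinvop q r hq0, Kinvop_comp_Kop q r hq0⟩, innerF_Fop q r, innerF_Kop q r⟩

end
end

section
/- Let C be a (strict) braided monoidal category with braiding β, σ a braided monoidal autoequivalence, D a (strict) right C-module category with action ⊙, and X an object of D. Suppose η is a ribbon σ-braid on D, i.e., a natural family η_{Y,U}: Y ⊙ σ(U) → Y ⊙ U satisfying the σ-octagon equation η_{Y⊙U, V} composed appropriately with braidings equals (η_{Y,V} ⊙ U) conjugated by braidings, and the ribbon σ-twist equation η_{Y, U⊗V} = η_{Y⊙U, V} ∘ (η_{Y,U} ⊙ σ(V)) (modulo the module associativity constraints and σ's tensor structure). Then θ_U := η_{X,U} is a cylinder σ-twist at X: it satisfies θ_{U⊗V} ∘ (X ⊙ (σ_2)_{U,V}) = (X ⊙ β_{V,U}) ∘ (θ_V ⊗ U) ∘ (X ⊙ β_{U,σ(V)}) ∘ (θ_U ⊗ σ(V)). -/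
open CategoryTheory MonoidalCategory

/-- Let `C` be a braided monoidal category, `σ` a (braided) monoidal autoequivalence with
tensor structure `σ₂`, and `D` a right `C`-module category with action bifunctor
`act : D × C ⥤ D` and module associativity constraints `Ψ`.  Suppose `η` is a ribbon
`σ`-braid on `D`: a natural family `η_{Y,U} : Y ⊙ σ(U) ≅ Y ⊙ U` satisfying the
`σ`-octagon equation and the ribbon `σ`-twist equation (written with the associators
`Ψ`).  Then for any object `X` of `D`, `θ_U := η_{X,U}` is a cylinder `σ`-twist at `X`:
`θ_{U⊗V} ∘ (X ⊙ (σ₂)_{U,V}) = (X ⊙ β_{V,U}) ∘ (θ_V ⊗ U) ∘ (X ⊙ β_{U,σ(V)}) ∘ (θ_U ⊗ σ(V))`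
(modulo the constraints `Ψ`). -/
theorem ribbon_braid_gives_cylinder_twist
    {C : Type*} [Category C] [MonoidalCategory C] [BraidedCategory C]
    {D : Type*} [Category D]
    (act : D × C ⥤ D)
    (σ : C ⥤ C)
    (σ2 : ∀ U V : C, σ.obj U ⊗ σ.obj V ≅ σ.obj (U ⊗ V))
    (Ψ : ∀ (X : D) (U V : C), act.obj (act.obj (X, U), V) ≅ act.obj (X, U ⊗ V))
    (η : ∀ (Y : D) (U : C), act.obj (Y, σ.obj U) ⟶ act.obj (Y, U))
    (hηiso : ∀ Y U, IsIso (η Y U))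
    (hηnat : ∀ {Y Z : D} {U V : C} (f : Y ⟶ Z) (g : U ⟶ V),
      act.map ((f, σ.map g) : (Y, σ.obj U) ⟶ (Z, σ.obj V)) ≫ η Z V =
        η Y U ≫ act.map ((f, g) : (Y, U) ⟶ (Z, V)))
    (hoctagon : ∀ (Y : D) (U V : C),
      η (act.obj (Y, U)) V =
        (Ψ Y U (σ.obj V)).hom ≫
        act.map ((𝟙 Y, (β_ U (σ.obj V)).hom) : (Y, U ⊗ σ.obj V) ⟶ (Y, σ.obj V ⊗ U)) ≫
        (Ψ Y (σ.obj V) U).inv ≫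
        act.map ((η Y V, 𝟙 U) : (act.obj (Y, σ.obj V), U) ⟶ (act.obj (Y, V), U)) ≫
        (Ψ Y V U).hom ≫
        act.map ((𝟙 Y, (β_ V U).hom) : (Y, V ⊗ U) ⟶ (Y, U ⊗ V)) ≫
        (Ψ Y U V).inv)
    (hribbon : ∀ (Y : D) (U V : C),
      η Y (U ⊗ V) =
        act.map ((𝟙 Y, (σ2 U V).inv) : (Y, σ.obj (U ⊗ V)) ⟶ (Y, σ.obj U ⊗ σ.obj V)) ≫
        (Ψ Y (σ.obj U) (σ.obj V)).inv ≫
        act.map ((η Y U, 𝟙 (σ.obj V)) :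
          (act.obj (Y, σ.obj U), σ.obj V) ⟶ (act.obj (Y, U), σ.obj V)) ≫
        η (act.obj (Y, U)) V ≫
        (Ψ Y U V).hom) :
    ∀ (X : D) (U V : C),
      act.map ((𝟙 X, (σ2 U V).hom) : (X, σ.obj U ⊗ σ.obj V) ⟶ (X, σ.obj (U ⊗ V))) ≫
        η X (U ⊗ V) =
      (Ψ X (σ.obj U) (σ.obj V)).inv ≫
      act.map ((η X U, 𝟙 (σ.obj V)) :
        (act.obj (X, σ.obj U), σ.obj V) ⟶ (act.obj (X, U), σ.obj V)) ≫
      (Ψ X U (σ.obj V)).hom ≫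
      act.map ((𝟙 X, (β_ U (σ.obj V)).hom) : (X, U ⊗ σ.obj V) ⟶ (X, σ.obj V ⊗ U)) ≫
      (Ψ X (σ.obj V) U).inv ≫
      act.map ((η X V, 𝟙 U) : (act.obj (X, σ.obj V), U) ⟶ (act.obj (X, V), U)) ≫
      (Ψ X V U).hom ≫
      act.map ((𝟙 X, (β_ V U).hom) : (X, V ⊗ U) ⟶ (X, U ⊗ V)) := by
  intro X U V
  rw [hribbon, hoctagon]
  slice_lhs 1 2 => rw [← act.map_comp]
  have : ((𝟙 X, (σ2 U V).hom) : (X, σ.obj U ⊗ σ.obj V) ⟶ (X, σ.obj (U ⊗ V))) ≫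
      ((𝟙 X, (σ2 U V).inv) : (X, σ.obj (U ⊗ V)) ⟶ (X, σ.obj U ⊗ σ.obj V)) =
      𝟙 ((X, σ.obj U ⊗ σ.obj V) : D × C) := by
    rw [prod_comp]; simp
  rw [this, act.map_id]
  simp
end

section
/- Let H be a Hopf algebra with coproduct Δ and antipode S, and define the adjoint action Ad(x)(y) = x_{(1)} y S(x_{(2)}). Let B ⊆ H be a subalgebra, K a group-like element of H, and suppose: (i) Ad(y)(b) ∈ B for all y in a sub-Hopf-algebra H_X ⊆ H and b ∈ B, and (ii) H_X K ⊆ B (i.e., y K ∈ B for all y ∈ H_X). Then for any x ∈ B, y ∈ H_X, one has Ad(y)(x K) K^{-1} ∈ B, where K^{-1} is the inverse of K. -/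
open scoped TensorProduct

/-- The adjoint action `Ad(x)(y) = x₍₁₎ y S(x₍₂₎)` of a Hopf algebra on itself. -/
noncomputable def adAct (k : Type*) {H : Type*} [CommRing k] [Ring H] [HopfAlgebra k H]
    (x y : H) : H :=
  TensorProduct.lift
    (LinearMap.mk₂ k (fun a b => a * y * (HopfAlgebra.antipode (R := k) b))
      (fun a a' b => by simp [add_mul])
      (fun c a b => by simp [Algebra.smul_mul_assoc])
      (fun a b b' => by simp [mul_add])
      (fun c a b => by simp [Algebra.mul_smul_comm]))
    (Coalgebra.comul (R := k) x)

/-!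
`Ad` makes `H` an `H`-module algebra: `Ad(y)(xK) = Ad(y₁)(x) Ad(y₂)(K)`. Hence
`Ad(y)(xK) K⁻¹ = Ad(y₁)(x) · Ad(y₂)(K) K⁻¹`, where the first factor lies in `B` by (i), and
`Ad(y₂)(K) K⁻¹ = y₂' · K S(y₂'') K⁻¹` lies in `H_X ⊆ B` because `K` normalizes `H_X`.
-/

open TensorProduct HopfAlgebra

namespace Coalgebra

variable {k H A : Type*} [CommSemiring k] [AddCommMonoid H] [Module k H] [Coalgebra k H]
  [Semiring A] [Algebra k A]

theorem sum_mul_mul_eq {ι : Type*} {κ Λ : ι → Type*} (f g h : H →ₗ[k] A) {y : H}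
    (r : Repr k y ι) (a₁ : (i : ι) → Repr k (r.left i) (κ i))
    (a₂ : (i : ι) → Repr k (r.right i) (Λ i)) :
    ∑ i ∈ r.index, ∑ j ∈ (a₁ i).index, f ((a₁ i).left j) * g ((a₁ i).right j) * h (r.right i) =
      ∑ i ∈ r.index, ∑ j ∈ (a₂ i).index, f (r.left i) * g ((a₂ i).left j) * h ((a₂ i).right j) := by
  simpa [map_sum, mul_assoc] using
    congrArg (LinearMap.mul' k A ∘ₗ map f (LinearMap.mul' k A ∘ₗ map g h)) (sum_tmul_tmul_eq r a₁ a₂)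

theorem exists_repr_of_comul_mem_range {M : Submodule k H} {y : H}
    (hy : comul y ∈ LinearMap.range (map M.subtype M.subtype)) :
    ∃ r : Repr k y (M × M), (∀ i, r.left i ∈ M) ∧ ∀ i, r.right i ∈ M := by
  obtain ⟨t, ht⟩ := hy
  obtain ⟨s, rfl⟩ := exists_finset (R := k) t
  exact ⟨⟨s, fun p => p.1, fun p => p.2, by simp [← ht, map_sum]⟩, fun p => p.1.2, fun p => p.2.2⟩

end Coalgebra

open Coalgebra

section AdjointAction

variable (k : Type*) {H : Type*} [CommRing k] [Ring H] [HopfAlgebra k H]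

noncomputable def adActLeft (z : H) : H →ₗ[k] H where
  toFun y := adAct k y z
  map_add' y y' := by simp [adAct]
  map_smul' c y := by simp [adAct]

@[simp]
theorem adActLeft_apply (y z : H) : adActLeft k z y = adAct k y z := rfl

variable {k}

theorem adAct_eq_sum {y : H} {ι : Type*} (r : Repr k y ι) (z : H) :
    adAct k y z = ∑ i ∈ r.index, r.left i * z * antipode k (r.right i) := by
  simp [adAct, ← r.eq, map_sum]

theorem sum_antipode_mul_adAct {y : H} {ι : Type*} (r : Repr k y ι) (z : H) :
    ∑ i ∈ r.index, antipode k (r.left i) * adAct k (r.right i) z = z * antipode k y := by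
  calc ∑ i ∈ r.index, antipode k (r.left i) * adAct k (r.right i) z
      = ∑ i ∈ r.index, ∑ j ∈ (ℛ k (r.right i)).index, antipode k (r.left i) *
          LinearMap.mulRight k z ((ℛ k (r.right i)).left j) *
          antipode k ((ℛ k (r.right i)).right j) := by
        simp only [adAct_eq_sum (ℛ k _), Finset.mul_sum, LinearMap.mulRight_apply, mul_assoc]
    _ = ∑ i ∈ r.index, ∑ j ∈ (ℛ k (r.left i)).index, antipode k ((ℛ k (r.left i)).left j) *
          LinearMap.mulRight k z ((ℛ k (r.left i)).right j) * antipode k (r.right i) :=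
        (sum_mul_mul_eq _ _ _ r _ _).symm
    _ = ∑ i ∈ r.index, counit (R := k) (r.left i) • (z * antipode k (r.right i)) := by
        simp only [LinearMap.mulRight_apply, ← mul_assoc, ← Finset.sum_mul,
          sum_antipode_mul_eq_smul, smul_mul_assoc, one_mul]
    _ = z * antipode k y := by
        simpa [map_sum] using
          congrArg (LinearMap.mulLeft k z ∘ₗ antipode k) (sum_counit_smul r)

theorem adAct_mul {y : H} {ι : Type*} (r : Repr k y ι) (a b : H) :
    adAct k y (a * b) = ∑ i ∈ r.index, adAct k (r.left i) a * adAct k (r.right i) b := by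
  calc adAct k y (a * b)
      = ∑ i ∈ r.index, ∑ j ∈ (ℛ k (r.right i)).index, LinearMap.mulRight k a (r.left i) *
          antipode k ((ℛ k (r.right i)).left j) *
          adActLeft k b ((ℛ k (r.right i)).right j) := by
        simp only [adAct_eq_sum r, LinearMap.mulRight_apply, adActLeft_apply, mul_assoc,
          ← Finset.mul_sum, sum_antipode_mul_adAct]
    _ = ∑ i ∈ r.index, ∑ j ∈ (ℛ k (r.left i)).index,
          LinearMap.mulRight k a ((ℛ k (r.left i)).left j) *
          antipode k ((ℛ k (r.left i)).right j) * adActLeft k b (r.right i) :=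
        (sum_mul_mul_eq _ _ _ r _ _).symm
    _ = ∑ i ∈ r.index, adAct k (r.left i) a * adAct k (r.right i) b := by
        simp only [adAct_eq_sum (ℛ k _), LinearMap.mulRight_apply, adActLeft_apply,
          Finset.sum_mul]

theorem adAct_mul_mem_of_conj_mem {A : Subalgebra k H} {K K' y : H}
    (hy : comul y ∈ LinearMap.range (map A.val.toLinearMap A.val.toLinearMap))
    (hS : ∀ a ∈ A, antipode k a ∈ A) (hconj : ∀ a ∈ A, K * a * K' ∈ A) :
    adAct k y K * K' ∈ A := by
  obtain ⟨r, hl, hr⟩ := exists_repr_of_comul_mem_range (M := Subalgebra.toSubmodule A) hy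
  rw [adAct_eq_sum r, Finset.sum_mul]
  refine A.sum_mem fun i _ => ?_
  simpa only [mul_assoc] using A.mul_mem (hl i) (hconj _ (hS _ (hr i)))

end AdjointAction

theorem adjoint_action_coideal_stability_general
    (k H : Type*) [Field k] [Ring H] [HopfAlgebra k H]
    (B HX : Subalgebra k H) (K Kinv : H)
    (hHXcomul : ∀ y ∈ HX, Coalgebra.comul (R := k) y ∈
      LinearMap.range (TensorProduct.map HX.val.toLinearMap HX.val.toLinearMap))
    (hHXantipode : ∀ y ∈ HX, HopfAlgebra.antipode (R := k) y ∈ HX)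
    (hHXB : HX ≤ B)
    (hKnorm : ∀ y ∈ HX, K * y * Kinv ∈ HX)
    (hyp_i : ∀ y ∈ HX, ∀ b ∈ B, adAct k y b ∈ B) :
    ∀ x ∈ B, ∀ y ∈ HX, adAct k y (x * K) * Kinv ∈ B := by
  intro x hx y hy
  obtain ⟨r, hl, hr⟩ :=
    exists_repr_of_comul_mem_range (M := Subalgebra.toSubmodule HX) (hHXcomul y hy)
  rw [adAct_mul r, Finset.sum_mul]
  refine B.sum_mem fun i _ => ?_
  rw [mul_assoc]
  exact B.mul_mem (hyp_i _ (hl i) x hx) <| hHXB <|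
    adAct_mul_mem_of_conj_mem (hHXcomul _ (hr i)) hHXantipode hKnorm

/-- Let `H` be a Hopf algebra, `B ⊆ H` a subalgebra, `H_X ⊆ H` a sub-Hopf-algebra
contained in `B` and normalized by the group-like element `K`, and suppose
(i) `Ad(y)(b) ∈ B` for `y ∈ H_X`, `b ∈ B`, and (ii) `H_X K ⊆ B`.
Then for any `x ∈ B` and `y ∈ H_X`, `Ad(y)(xK)K⁻¹ ∈ B`, where `K⁻¹` is the inverse
of `K`. -/
theorem adjoint_action_coideal_stability
    (k H : Type*) [Field k] [Ring H] [HopfAlgebra k H]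
    (B HX : Subalgebra k H) (K Kinv : H)
    (hKgrp : Coalgebra.comul (R := k) K = K ⊗ₜ[k] K)
    (hK1 : K * Kinv = 1) (hK2 : Kinv * K = 1)
    (hHXcomul : ∀ y ∈ HX, Coalgebra.comul (R := k) y ∈
      LinearMap.range (TensorProduct.map HX.val.toLinearMap HX.val.toLinearMap))
    (hHXantipode : ∀ y ∈ HX, HopfAlgebra.antipode (R := k) y ∈ HX)
    (hHXB : HX ≤ B)
    (hKnorm : ∀ y ∈ HX, K * y * Kinv ∈ HX)
    (hyp_i : ∀ y ∈ HX, ∀ b ∈ B, adAct k y b ∈ B)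
    (hyp_ii : ∀ y ∈ HX, y * K ∈ B) :
    ∀ x ∈ B, ∀ y ∈ HX, adAct k y (x * K) * Kinv ∈ B :=
  adjoint_action_coideal_stability_general k H B HX K Kinv hHXcomul hHXantipode hHXB hKnorm hyp_i
end
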